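/- Let Ω ⊆ ℝ^N (N ≥ 2) be open, bounded and convex with 0 ∈ Ω, and let s > 0 satisfy that the closed ball B̄_s(0) ⊆ {x ∈ Ω : dist(x, ℝ^N ∖ Ω) > 4s}. For any r ∈ [0, s), the map H : E_{2,r}(Ω) × [0,1] → E_{2,r}(Ω), H(ξ_1, ξ_2, t) := ((1−t)ξ_1 + t·s·(ξ_1−ξ_2)/|ξ_1−ξ_2|, (1−t)ξ_2 + t·s·(ξ_2−ξ_1)/|ξ_1−ξ_2|), is well defined (takes values in E_{2,r}(Ω)) and is a homotopy from the identity of E_{2,r}(Ω) to ι_r ∘ ϱ_r; consequently E_{2,r}(Ω) is homotopy equivalent to S^{N−1}. -/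

import Mathlib

open Metric

/-- The space `E_{2,r}(Ω)` of pairs `(ξ₁, ξ₂) ∈ Ω²` with
`dist(ξ₁, ℝ^N ∖ Ω) > 4r`, `dist(ξ₂, ℝ^N ∖ Ω) > 2r` and `|ξ₂ − ξ₁| > 2r`. -/
def ETwo {N : ℕ} (r : ℝ) (Ω : Set (EuclideanSpace ℝ (Fin N))) :
    Set (EuclideanSpace ℝ (Fin N) × EuclideanSpace ℝ (Fin N)) :=
  {p | p.1 ∈ Ω ∧ p.2 ∈ Ω ∧ 4 * r < infDist p.1 Ωᶜ ∧ 2 * r < infDist p.2 Ωᶜ ∧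
    2 * r < dist p.2 p.1}

/-!
The homotopy is the straight line `t ↦ (1 - t) • p + t • ι (ϱ p)` in `ℝ^N × ℝ^N`. Since
`x ↦ dist(x, ℝ^N ∖ Ω)` is concave on the convex set `Ω`, its strict superlevel sets are
convex; both coordinates of `p` and of `ι (ϱ p) ∈ B̄_s(0) × B̄_s(0)` lie in the relevant ones,
hence so do both coordinates along the segment. The two coordinates stay on the line through
`ξ₁, ξ₂`, and their distance interpolates linearly between `|ξ₁ - ξ₂| > 2r` and `2s > 2r`.
So `ι ∘ ϱ` is homotopic to the identity inside `E_{2,r}(Ω)`, while `ϱ ∘ ι` is the identity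
of the sphere.
-/

section InfDistCompl

variable {E : Type*} [NormedAddCommGroup E] [NormedSpace ℝ E] {s : Set E}

theorem add_infDist_compl_smul_mem {x w : E} (hx : x ∈ s) (hw : ‖w‖ < 1) :
    x + infDist x sᶜ • w ∈ s := by
  rcases (infDist_nonneg (x := x) (s := sᶜ)).eq_or_lt with h | h
  · simpa [← h] using hx
  · apply ball_infDist_compl_subset
    rw [mem_ball, dist_eq_norm, add_sub_cancel_left, norm_smul, Real.norm_of_nonneg h.le]
    exact mul_lt_of_lt_one_right h hw

theorem Convex.concaveOn_infDist_compl (hs : Convex ℝ s) :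
    ConcaveOn ℝ s (fun x => infDist x sᶜ) := by
  refine ⟨hs, fun x hx y hy a b ha hb hab => ?_⟩
  rcases sᶜ.eq_empty_or_nonempty with hc | hc
  · simp [hc]
  set d := a • infDist x sᶜ + b • infDist y sᶜ
  refine (le_infDist hc).2 fun z hz => not_lt.1 fun hzd => hz ?_
  have hd : 0 < d := dist_nonneg.trans_lt hzd
  set w := d⁻¹ • (z - (a • x + b • y))
  have hw : ‖w‖ < 1 := by
    rw [norm_smul, norm_inv, Real.norm_of_nonneg hd.le, ← dist_eq_norm, dist_comm,
      inv_mul_lt_one₀ hd]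
    exact hzd
  -- `z` is the same convex combination of two points of `s`, obtained by moving `x` and `y`
  -- along `w` proportionally to their distances to `sᶜ`
  have hz : z = a • (x + infDist x sᶜ • w) + b • (y + infDist y sᶜ • w) :=
    calc z = (a • x + b • y) + d • w := by simp [w, smul_smul, mul_inv_cancel₀ hd.ne']
      _ = _ := by simp only [d]; module
  rw [hz]
  exact hs (add_infDist_compl_smul_mem hx hw) (add_infDist_compl_smul_mem hy hw) ha hb hab

end InfDistCompl

namespace ContinuousMap.Homotopy

variable {E : Type*} [AddCommGroup E] [TopologicalSpace E] [IsTopologicalAddGroup E]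
  [Module ℝ E] [ContinuousSMul ℝ E] {X : Set E}

def affineWithin (f : C(X, X))
    (hf : ∀ (x : X) (t : unitInterval), AffineMap.lineMap (x : E) (f x : E) (t : ℝ) ∈ X) :
    (ContinuousMap.id X).Homotopy f where
  toFun p := ⟨AffineMap.lineMap (p.2 : E) (f p.2 : E) (p.1 : ℝ), hf p.2 p.1⟩
  continuous_toFun := by
    refine Continuous.subtype_mk ?_ _
    simp only [AffineMap.lineMap_apply_module]
    fun_prop
  map_zero_left x := by simp
  map_one_left x := by simp

end ContinuousMap.Homotopy

section Antipodal

variable {E : Type*} [NormedAddCommGroup E] [NormedSpace ℝ E]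

/-- The map `ϱ_r`, extended by `0` to the diagonal. -/
noncomputable def unitDirection (p : E × E) : E := ‖p.1 - p.2‖⁻¹ • (p.1 - p.2)

/-- The map `ι_r`, with the radius `s` as a parameter. -/
def antipodalPair (s : ℝ) (x : E) : E × E := (s • x, -(s • x))

theorem norm_unitDirection {p : E × E} (h : p.1 ≠ p.2) : ‖unitDirection p‖ = 1 :=
  norm_smul_inv_norm (sub_ne_zero.2 h)

theorem norm_smul_unitDirection {p : E × E} (h : p.1 ≠ p.2) :
    ‖p.1 - p.2‖ • unitDirection p = p.1 - p.2 := by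
  rw [unitDirection, smul_smul, mul_inv_cancel₀ (norm_ne_zero_iff.2 (sub_ne_zero.2 h)), one_smul]

theorem continuousOn_unitDirection : ContinuousOn (unitDirection (E := E)) {p | p.1 ≠ p.2} :=
  (continuous_fst.sub continuous_snd).norm.continuousOn.inv₀
    (fun p hp => norm_ne_zero_iff.2 (sub_ne_zero.2 hp)) |>.smul (by fun_prop)

theorem unitDirection_antipodalPair {s : ℝ} {x : E} (hs : 0 < s) (hx : ‖x‖ = 1) :
    unitDirection (antipodalPair s x) = x := by
  have hsub : s • x - -(s • x) = (2 * s) • x := by module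
  rw [unitDirection, antipodalPair, hsub, norm_smul, hx, Real.norm_of_nonneg (by positivity),
    mul_one, smul_smul, inv_mul_cancel₀ (by positivity), one_smul]

theorem lineMap_antipodalPair_unitDirection (p : E × E) (s t : ℝ) :
    AffineMap.lineMap p (antipodalPair s (unitDirection p)) t =
      ((1 - t) • p.1 + (t * s) • (‖p.1 - p.2‖⁻¹ • (p.1 - p.2)),
        (1 - t) • p.2 + (t * s) • (‖p.1 - p.2‖⁻¹ • (p.2 - p.1))) := by
  ext <;> simp only [AffineMap.lineMap_apply_module, Prod.fst_add, Prod.snd_add, Prod.smul_fst,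
    Prod.smul_snd, antipodalPair, unitDirection] <;> module

theorem dist_lineMap_antipodalPair_unitDirection {p : E × E} (h : p.1 ≠ p.2) {s : ℝ}
    (hs : 0 ≤ s) {t : ℝ} (ht : t ∈ Set.Icc (0 : ℝ) 1) :
    dist (AffineMap.lineMap p (antipodalPair s (unitDirection p)) t).2
        (AffineMap.lineMap p (antipodalPair s (unitDirection p)) t).1 =
      (1 - t) * dist p.2 p.1 + t * (2 * s) := by
  have hsub : (AffineMap.lineMap p (antipodalPair s (unitDirection p)) t).1 -
        (AffineMap.lineMap p (antipodalPair s (unitDirection p)) t).2 =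
      ((1 - t) * ‖p.1 - p.2‖ + t * (2 * s)) • unitDirection p := by
    simp only [AffineMap.lineMap_apply_module, Prod.fst_add, Prod.snd_add, Prod.smul_fst,
      Prod.smul_snd, antipodalPair]
    linear_combination (norm := module) (t - 1) • norm_smul_unitDirection h
  obtain ⟨ht₀, ht₁⟩ := ht
  rw [dist_comm, dist_eq_norm, hsub, norm_smul, norm_unitDirection h, mul_one,
    Real.norm_of_nonneg (by positivity), dist_eq_norm']

end Antipodal

section ETwo

variable {N : ℕ} {Ω : Set (EuclideanSpace ℝ (Fin N))} {r s : ℝ}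
  {p : EuclideanSpace ℝ (Fin N) × EuclideanSpace ℝ (Fin N)}

theorem fst_ne_snd_of_mem_eTwo (hr : 0 ≤ r) (hp : p ∈ ETwo r Ω) : p.1 ≠ p.2 := fun h =>
  (hp.2.2.2.2.trans_le' (by positivity)).ne' (by rw [h, dist_self])

theorem antipodalPair_mem_eTwo
    (hball : closedBall (0 : EuclideanSpace ℝ (Fin N)) s ⊆
      {x | x ∈ Ω ∧ 4 * s < infDist x Ωᶜ})
    (hr : 0 ≤ r) (hrs : r < s) {x : EuclideanSpace ℝ (Fin N)} (hx : ‖x‖ = 1) :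
    antipodalPair s x ∈ ETwo r Ω := by
  have hs : 0 < s := hr.trans_lt hrs
  have hnorm : ‖s • x‖ = s := by rw [norm_smul, hx, mul_one, Real.norm_of_nonneg hs.le]
  obtain ⟨hx₁, hd₁⟩ := hball (mem_closedBall_zero_iff.2 hnorm.le)
  obtain ⟨hx₂, hd₂⟩ := hball (mem_closedBall_zero_iff.2 (by rw [norm_neg, hnorm]))
  refine ⟨hx₁, hx₂, lt_trans (by linarith) hd₁, lt_trans (by linarith) hd₂, ?_⟩
  have hsub : -(s • x) - s • x = (-(2 * s)) • x := by module
  rw [antipodalPair, dist_eq_norm, hsub, norm_smul, hx, mul_one, norm_neg,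
    Real.norm_of_nonneg (by positivity)]
  linarith

theorem lineMap_antipodalPair_unitDirection_mem_eTwo (hΩ : Convex ℝ Ω)
    (hball : closedBall (0 : EuclideanSpace ℝ (Fin N)) s ⊆
      {x | x ∈ Ω ∧ 4 * s < infDist x Ωᶜ})
    (hr : 0 ≤ r) (hrs : r < s) (hp : p ∈ ETwo r Ω) {t : ℝ} (ht : t ∈ Set.Icc (0 : ℝ) 1) :
    AffineMap.lineMap p (antipodalPair s (unitDirection p)) t ∈ ETwo r Ω := by
  have hne := fst_ne_snd_of_mem_eTwo hr hp
  obtain ⟨hp₁, hp₂, hpd₁, hpd₂, hpd⟩ := hp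
  obtain ⟨hq₁, hq₂, hqd₁, hqd₂, -⟩ :=
    antipodalPair_mem_eTwo hball hr hrs (norm_unitDirection hne)
  have hsuper (c : ℝ) := hΩ.concaveOn_infDist_compl.convex_gt c
  obtain ⟨h₁, hd₁⟩ := (hsuper (4 * r)).lineMap_mem ⟨hp₁, hpd₁⟩ ⟨hq₁, hqd₁⟩ ht
  obtain ⟨h₂, hd₂⟩ := (hsuper (2 * r)).lineMap_mem ⟨hp₂, hpd₂⟩ ⟨hq₂, hqd₂⟩ ht
  rw [← AffineMap.fst_lineMap] at h₁ hd₁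
  rw [← AffineMap.snd_lineMap] at h₂ hd₂
  refine ⟨h₁, h₂, hd₁, hd₂, ?_⟩
  rw [dist_lineMap_antipodalPair_unitDirection hne (hr.trans hrs.le) ht]
  simpa [AffineMap.lineMap_apply_module] using
    (convex_Ioi (2 * r)).lineMap_mem hpd (show 2 * r < 2 * s by linarith) ht

noncomputable def eTwoToSphere (hr : 0 ≤ r) :
    C(ETwo r Ω, sphere (0 : EuclideanSpace ℝ (Fin N)) 1) where
  toFun p := ⟨unitDirection (p : EuclideanSpace ℝ (Fin N) × EuclideanSpace ℝ (Fin N)),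
    mem_sphere_zero_iff_norm.2 (norm_unitDirection (fst_ne_snd_of_mem_eTwo hr p.2))⟩
  continuous_toFun := (continuousOn_unitDirection.comp_continuous continuous_subtype_val
    fun p => fst_ne_snd_of_mem_eTwo hr p.2).subtype_mk _

noncomputable def sphereToETwo
    (hball : closedBall (0 : EuclideanSpace ℝ (Fin N)) s ⊆
      {x | x ∈ Ω ∧ 4 * s < infDist x Ωᶜ})
    (hr : 0 ≤ r) (hrs : r < s) : C(sphere (0 : EuclideanSpace ℝ (Fin N)) 1, ETwo r Ω) where
  toFun x := ⟨antipodalPair s x,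
    antipodalPair_mem_eTwo hball hr hrs (mem_sphere_zero_iff_norm.1 x.2)⟩
  continuous_toFun := by
    refine Continuous.subtype_mk ?_ _
    simp only [antipodalPair]
    fun_prop

theorem eTwoToSphere_comp_sphereToETwo
    (hball : closedBall (0 : EuclideanSpace ℝ (Fin N)) s ⊆
      {x | x ∈ Ω ∧ 4 * s < infDist x Ωᶜ})
    (hr : 0 ≤ r) (hrs : r < s) :
    (eTwoToSphere hr).comp (sphereToETwo hball hr hrs) = ContinuousMap.id _ := by
  ext x : 2
  exact unitDirection_antipodalPair (hr.trans_lt hrs) (mem_sphere_zero_iff_norm.1 x.2)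

noncomputable def eTwoHomotopy (hΩ : Convex ℝ Ω)
    (hball : closedBall (0 : EuclideanSpace ℝ (Fin N)) s ⊆
      {x | x ∈ Ω ∧ 4 * s < infDist x Ωᶜ})
    (hr : 0 ≤ r) (hrs : r < s) :
    (ContinuousMap.id (ETwo r Ω)).Homotopy
      ((sphereToETwo hball hr hrs).comp (eTwoToSphere hr)) :=
  ContinuousMap.Homotopy.affineWithin _ fun p t =>
    lineMap_antipodalPair_unitDirection_mem_eTwo hΩ hball hr hrs p.2 t.2

end ETwo

theorem eTwo_homotopy_equiv_sphere_general (N : ℕ)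
    (Ω : Set (EuclideanSpace ℝ (Fin N)))
    (hΩc : Convex ℝ Ω)
    (s : ℝ)
    (hball : closedBall (0 : EuclideanSpace ℝ (Fin N)) s ⊆
      {x | x ∈ Ω ∧ 4 * s < infDist x Ωᶜ})
    (r : ℝ) (hr : 0 ≤ r) (hrs : r < s) :
    (∀ p ∈ ETwo r Ω, ∀ t ∈ Set.Icc (0 : ℝ) 1,
      ((1 - t) • p.1 + (t * s) • (‖p.1 - p.2‖⁻¹ • (p.1 - p.2)),
        (1 - t) • p.2 + (t * s) • (‖p.1 - p.2‖⁻¹ • (p.2 - p.1))) ∈ ETwo r Ω) ∧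
    (∃ H : C(↥(ETwo r Ω) × unitInterval, ↥(ETwo r Ω)),
      (∀ (q : ↥(ETwo r Ω)) (t : unitInterval),
        ((H (q, t) : EuclideanSpace ℝ (Fin N) × EuclideanSpace ℝ (Fin N)))
          = ((1 - (t : ℝ)) • (q : EuclideanSpace ℝ (Fin N) × EuclideanSpace ℝ (Fin N)).1
                + ((t : ℝ) * s) • (‖(q : EuclideanSpace ℝ (Fin N) × EuclideanSpace ℝ (Fin N)).1 - (q : EuclideanSpace ℝ (Fin N) × EuclideanSpace ℝ (Fin N)).2‖⁻¹
                    • ((q : EuclideanSpace ℝ (Fin N) × EuclideanSpace ℝ (Fin N)).1 - (q : EuclideanSpace ℝ (Fin N) × EuclideanSpace ℝ (Fin N)).2)),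
              (1 - (t : ℝ)) • (q : EuclideanSpace ℝ (Fin N) × EuclideanSpace ℝ (Fin N)).2
                + ((t : ℝ) * s) • (‖(q : EuclideanSpace ℝ (Fin N) × EuclideanSpace ℝ (Fin N)).1 - (q : EuclideanSpace ℝ (Fin N) × EuclideanSpace ℝ (Fin N)).2‖⁻¹
                    • ((q : EuclideanSpace ℝ (Fin N) × EuclideanSpace ℝ (Fin N)).2 - (q : EuclideanSpace ℝ (Fin N) × EuclideanSpace ℝ (Fin N)).1)))) ∧
      (∀ q : ↥(ETwo r Ω), H (q, 0) = q) ∧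
      (∀ q : ↥(ETwo r Ω),
        ((H (q, 1) : EuclideanSpace ℝ (Fin N) × EuclideanSpace ℝ (Fin N)))
          = (s • (‖(q : EuclideanSpace ℝ (Fin N) × EuclideanSpace ℝ (Fin N)).1 - (q : EuclideanSpace ℝ (Fin N) × EuclideanSpace ℝ (Fin N)).2‖⁻¹ • ((q : EuclideanSpace ℝ (Fin N) × EuclideanSpace ℝ (Fin N)).1 - (q : EuclideanSpace ℝ (Fin N) × EuclideanSpace ℝ (Fin N)).2)),
              -(s • (‖(q : EuclideanSpace ℝ (Fin N) × EuclideanSpace ℝ (Fin N)).1 - (q : EuclideanSpace ℝ (Fin N) × EuclideanSpace ℝ (Fin N)).2‖⁻¹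
                  • ((q : EuclideanSpace ℝ (Fin N) × EuclideanSpace ℝ (Fin N)).1 - (q : EuclideanSpace ℝ (Fin N) × EuclideanSpace ℝ (Fin N)).2)))))) ∧
    Nonempty (ContinuousMap.HomotopyEquiv ↥(ETwo r Ω)
      ↥(sphere (0 : EuclideanSpace ℝ (Fin N)) 1)) := by
  let H := eTwoHomotopy hΩc hball hr hrs
  refine ⟨fun p hp t ht => ?_, ⟨H.toContinuousMap.comp ContinuousMap.prodSwap, fun q t => ?_,
    H.apply_zero, fun q => congrArg Subtype.val (H.apply_one q)⟩, ⟨?_⟩⟩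
  · rw [← lineMap_antipodalPair_unitDirection]
    exact lineMap_antipodalPair_unitDirection_mem_eTwo hΩc hball hr hrs hp ht
  · exact lineMap_antipodalPair_unitDirection _ _ _
  · refine ⟨eTwoToSphere hr, sphereToETwo hball hr hrs, ⟨H.symm⟩, ?_⟩
    rw [eTwoToSphere_comp_sphereToETwo]

/-- The straight-line map `H((ξ₁,ξ₂),t)` pushing `ξ₁, ξ₂` to antipodal points at distance
`2s` is well defined on `E_{2,r}(Ω)`, gives a homotopy from the identity to `ι_r ∘ ϱ_r`,
and consequently `E_{2,r}(Ω)` is homotopy equivalent to the sphere `S^{N−1}`. -/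
theorem eTwo_homotopy_equiv_sphere (N : ℕ) (hN : 2 ≤ N)
    (Ω : Set (EuclideanSpace ℝ (Fin N)))
    (hΩo : IsOpen Ω) (hΩb : Bornology.IsBounded Ω) (hΩc : Convex ℝ Ω)
    (h0 : (0 : EuclideanSpace ℝ (Fin N)) ∈ Ω) (s : ℝ) (hs : 0 < s)
    (hball : closedBall (0 : EuclideanSpace ℝ (Fin N)) s ⊆
      {x | x ∈ Ω ∧ 4 * s < infDist x Ωᶜ})
    (r : ℝ) (hr : 0 ≤ r) (hrs : r < s) :
    (∀ p ∈ ETwo r Ω, ∀ t ∈ Set.Icc (0 : ℝ) 1,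
      ((1 - t) • p.1 + (t * s) • (‖p.1 - p.2‖⁻¹ • (p.1 - p.2)),
        (1 - t) • p.2 + (t * s) • (‖p.1 - p.2‖⁻¹ • (p.2 - p.1))) ∈ ETwo r Ω) ∧
    (∃ H : C(↥(ETwo r Ω) × unitInterval, ↥(ETwo r Ω)),
      (∀ (q : ↥(ETwo r Ω)) (t : unitInterval),
        ((H (q, t) : EuclideanSpace ℝ (Fin N) × EuclideanSpace ℝ (Fin N)))
          = ((1 - (t : ℝ)) • (q : EuclideanSpace ℝ (Fin N) × EuclideanSpace ℝ (Fin N)).1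
                + ((t : ℝ) * s) • (‖(q : EuclideanSpace ℝ (Fin N) × EuclideanSpace ℝ (Fin N)).1 - (q : EuclideanSpace ℝ (Fin N) × EuclideanSpace ℝ (Fin N)).2‖⁻¹
                    • ((q : EuclideanSpace ℝ (Fin N) × EuclideanSpace ℝ (Fin N)).1 - (q : EuclideanSpace ℝ (Fin N) × EuclideanSpace ℝ (Fin N)).2)),
              (1 - (t : ℝ)) • (q : EuclideanSpace ℝ (Fin N) × EuclideanSpace ℝ (Fin N)).2
                + ((t : ℝ) * s) • (‖(q : EuclideanSpace ℝ (Fin N) × EuclideanSpace ℝ (Fin N)).1 - (q : EuclideanSpace ℝ (Fin N) × EuclideanSpace ℝ (Fin N)).2‖⁻¹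
                    • ((q : EuclideanSpace ℝ (Fin N) × EuclideanSpace ℝ (Fin N)).2 - (q : EuclideanSpace ℝ (Fin N) × EuclideanSpace ℝ (Fin N)).1)))) ∧
      (∀ q : ↥(ETwo r Ω), H (q, 0) = q) ∧
      (∀ q : ↥(ETwo r Ω),
        ((H (q, 1) : EuclideanSpace ℝ (Fin N) × EuclideanSpace ℝ (Fin N)))
          = (s • (‖(q : EuclideanSpace ℝ (Fin N) × EuclideanSpace ℝ (Fin N)).1 - (q : EuclideanSpace ℝ (Fin N) × EuclideanSpace ℝ (Fin N)).2‖⁻¹ • ((q : EuclideanSpace ℝ (Fin N) × EuclideanSpace ℝ (Fin N)).1 - (q : EuclideanSpace ℝ (Fin N) × EuclideanSpace ℝ (Fin N)).2)),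
              -(s • (‖(q : EuclideanSpace ℝ (Fin N) × EuclideanSpace ℝ (Fin N)).1 - (q : EuclideanSpace ℝ (Fin N) × EuclideanSpace ℝ (Fin N)).2‖⁻¹
                  • ((q : EuclideanSpace ℝ (Fin N) × EuclideanSpace ℝ (Fin N)).1 - (q : EuclideanSpace ℝ (Fin N) × EuclideanSpace ℝ (Fin N)).2)))))) ∧
    Nonempty (ContinuousMap.HomotopyEquiv ↥(ETwo r Ω)
      ↥(sphere (0 : EuclideanSpace ℝ (Fin N)) 1)) :=
  eTwo_homotopy_equiv_sphere_general N Ω hΩc s hball r hr hrs
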